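/- arXiv:1112.5968 — 4 statements merged into one kernel-verified Lean document; each statement's English description precedes it below -/
import Mathlib

section
/- Let D be a subset of a Banach space X, ν a homogeneous generalized measure of noncompactness, and h : D → X a map such that ν(h(A)) ≤ k ν(A) for all bounded A ⊆ D, where k < 1. Then any bounded sequence (x_j) in D with x_j - h(x_j) → 0 has a subsequence converging in X. -/
open Set Bornology Pointwise Filter Topology

theorem kset_contraction_property_F
    {X : Type*} [NormedAddCommGroup X] [NormedSpace ℝ X] [CompleteSpace X]
    (ν : Set X → ℝ)
    (hnonneg : ∀ A : Set X, 0 ≤ ν A)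
    (hzero : ∀ A : Set X, IsBounded A → (ν A = 0 ↔ IsCompact (closure A)))
    (hadd : ∀ A B : Set X, IsBounded A → IsBounded B → ν (A + B) ≤ ν A + ν B)
    (hconv : ∀ A : Set X, IsBounded A → ν (closure (convexHull ℝ A)) = ν A)
    (hsmul : ∀ (l : ℝ), 0 ≤ l → ∀ A : Set X, IsBounded A → ν (l • A) = l * ν A)
    (hmono : ∀ A B : Set X, IsBounded B → A ⊆ B → ν A ≤ ν B)
    (D : Set X) (h : X → X) (k : ℝ) (hk : k < 1)
    (hcontr : ∀ A : Set X, A ⊆ D → IsBounded A → ν (h '' A) ≤ k * ν A)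
    (x : ℕ → X) (hxD : ∀ j, x j ∈ D) (hxbdd : IsBounded (range x))
    (hconv0 : Tendsto (fun j => x j - h (x j)) atTop (𝓝 0)) :
    ∃ φ : ℕ → ℕ, StrictMono φ ∧ ∃ l : X, Tendsto (x ∘ φ) atTop (𝓝 l) := by
  set A : Set X := range x with hA
  set C : Set X := range (fun j => x j - h (x j)) with hC
  have hAD : A ⊆ D := range_subset_iff.mpr hxD
  -- closure C is compact
  have hCc : IsCompact (closure C) := by
    have h1 : IsCompact (insert (0 : X) C) := hconv0.isCompact_insert_range
    exact h1.of_isClosed_subset isClosed_closure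
      (closure_minimal (subset_insert _ _) h1.isClosed)
  have hCbdd : IsBounded C := hCc.isBounded.subset subset_closure
  -- h '' A bounded
  have hhAbdd : IsBounded (h '' A) := by
    have : h '' A ⊆ A - C := by
      rintro _ ⟨_, ⟨j, rfl⟩, rfl⟩
      exact ⟨x j, ⟨j, rfl⟩, x j - h (x j), ⟨j, rfl⟩, sub_sub_cancel _ _⟩
    exact (hxbdd.sub hCbdd).subset this
  have hνC : ν C = 0 := (hzero C hCbdd).mpr hCc
  have hsub : A ⊆ C + h '' A := by
    rintro _ ⟨j, rfl⟩
    exact ⟨x j - h (x j), ⟨j, rfl⟩, h (x j), ⟨x j, ⟨j, rfl⟩, rfl⟩, sub_add_cancel _ _⟩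
  have hchain : ν A ≤ k * ν A := by
    calc ν A ≤ ν (C + h '' A) := hmono _ _ (hCbdd.add hhAbdd) hsub
      _ ≤ ν C + ν (h '' A) := hadd _ _ hCbdd hhAbdd
      _ = ν (h '' A) := by rw [hνC, zero_add]
      _ ≤ k * ν A := hcontr A hAD hxbdd
  have hνA : ν A = 0 := by nlinarith [hnonneg A]
  have hAc : IsCompact (closure A) := (hzero A hxbdd).mp hνA
  obtain ⟨l, _, φ, hφ, hl⟩ := hAc.tendsto_subseq (fun j => subset_closure ⟨j, rfl⟩)
  exact ⟨φ, hφ, l, hl⟩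
end

section
/- Let C be a cone in a Banach space X, and h : C → C positively homogeneous with ‖h^n‖_C < 1 for some n ≥ 1, where ‖g‖_C = sup over nonzero x ∈ C of ‖g(x)‖/‖x‖. Then every bounded sequence (x_j) in C with x_j - h(x_j) → 0 satisfies x_j → 0, provided h is uniformly continuous on bounded subsets of C. In particular, 0 is the unique fixed point of h in C. -/
open Set Bornology Filter Topology

theorem bonsall_lt_one_implies_convergence_and_unique_fixed_point
    {X : Type*} [NormedAddCommGroup X] [NormedSpace ℝ X] [CompleteSpace X]
    (C : Set X)
    (hcone : ∀ t : ℝ, 0 ≤ t → ∀ x ∈ C, t • x ∈ C)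
    (h : X → X) (hmaps : MapsTo h C C)
    (hhom : ∀ t : ℝ, 0 < t → ∀ x ∈ C, h (t • x) = t • h x)
    (hunif : ∀ S : Set X, S ⊆ C → IsBounded S → UniformContinuousOn h S)
    (n : ℕ) (hn : 1 ≤ n) (M : ℝ) (hM : M < 1)
    (hnorm : ∀ x ∈ C, ‖h^[n] x‖ ≤ M * ‖x‖) :
    (∀ x : ℕ → X, (∀ j, x j ∈ C) → IsBounded (range x) →
        Tendsto (fun j => x j - h (x j)) atTop (𝓝 0) →
        Tendsto x atTop (𝓝 0)) ∧
    (∀ x ∈ C, h x = x → x = 0) := by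
  have main : ∀ x : ℕ → X, (∀ j, x j ∈ C) → IsBounded (range x) →
      Tendsto (fun j => x j - h (x j)) atTop (𝓝 0) →
      Tendsto x atTop (𝓝 0) := by
    intro x hxC hxbdd hconv
    -- Step 1: for every k, x j - h^[k] (x j) → 0
    have key : ∀ k : ℕ, Tendsto (fun j => x j - h^[k] (x j)) atTop (𝓝 0) := by
      intro k
      induction k with
      | zero => simpa using (tendsto_const_nhds : Tendsto (fun _ : ℕ => (0 : X)) atTop (𝓝 0))
      | succ k ih =>
        have hkC : ∀ j, h^[k] (x j) ∈ C := fun j => (hmaps.iterate k) (hxC j)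
        -- boundedness of h^[k] ∘ x
        obtain ⟨R, hR⟩ := isBounded_iff_forall_norm_le.1 hxbdd
        have hRx : ∀ j, ‖x j‖ ≤ R := fun j => hR _ (mem_range_self j)
        obtain ⟨R', hR'⟩ := isBounded_iff_forall_norm_le.1
          (Metric.isBounded_range_of_tendsto _ ih)
        have hR'x : ∀ j, ‖x j - h^[k] (x j)‖ ≤ R' := fun j => hR' _ (mem_range_self j)
        have hkb : ∀ j, ‖h^[k] (x j)‖ ≤ R + R' := by
          intro j
          have heq : h^[k] (x j) = x j - (x j - h^[k] (x j)) := by abel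
          rw [heq]
          calc ‖x j - (x j - h^[k] (x j))‖ ≤ ‖x j‖ + ‖x j - h^[k] (x j)‖ :=
                norm_sub_le _ _
            _ ≤ R + R' := add_le_add (hRx j) (hR'x j)
        -- the bounded set S
        set S : Set X := C ∩ Metric.closedBall 0 (max R (R + R')) with hS
        have hSsub : S ⊆ C := inter_subset_left
        have hSbdd : IsBounded S := (Metric.isBounded_closedBall).subset inter_subset_right
        have hxS : ∀ j, x j ∈ S := by
          intro j
          refine ⟨hxC j, ?_⟩
          simp only [Metric.mem_closedBall, dist_zero_right]
          exact le_trans (hRx j) (le_max_left _ _)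
        have hkS : ∀ j, h^[k] (x j) ∈ S := by
          intro j
          refine ⟨hkC j, ?_⟩
          simp only [Metric.mem_closedBall, dist_zero_right]
          exact le_trans (hkb j) (le_max_right _ _)
        have huc := hunif S hSsub hSbdd
        -- h (x j) - h (h^[k] (x j)) → 0
        have step : Tendsto (fun j => h (x j) - h (h^[k] (x j))) atTop (𝓝 0) := by
          rw [NormedAddCommGroup.tendsto_nhds_zero]
          intro ε hε
          obtain ⟨δ, hδ, hδ'⟩ := (Metric.uniformContinuousOn_iff ).1 huc ε hε
          have hev : ∀ᶠ j in atTop, ‖x j - h^[k] (x j)‖ < δ := by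
            have := (NormedAddCommGroup.tendsto_nhds_zero.1 ih) δ hδ
            exact this
          filter_upwards [hev] with j hj
          have := hδ' (x j) (hxS j) (h^[k] (x j)) (hkS j) (by
            rwa [dist_eq_norm])
          rwa [dist_eq_norm] at this
        have hsum : Tendsto (fun j => (x j - h (x j)) + (h (x j) - h (h^[k] (x j))))
            atTop (𝓝 (0 + 0)) := hconv.add step
        rw [add_zero] at hsum
        refine hsum.congr fun j => ?_
        rw [Function.iterate_succ_apply']
        abel
    -- Step 2: conclude using hnorm
    have hfinal := key n
    rw [tendsto_zero_iff_norm_tendsto_zero]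
    have h1M : (0:ℝ) < 1 - M := by linarith
    have hbound : ∀ j, ‖x j‖ ≤ (1 - M)⁻¹ * ‖x j - h^[n] (x j)‖ := by
      intro j
      have h1 : ‖x j‖ ≤ ‖x j - h^[n] (x j)‖ + ‖h^[n] (x j)‖ := by
        have := norm_add_le (x j - h^[n] (x j)) (h^[n] (x j))
        simpa using this
      have h2 : ‖h^[n] (x j)‖ ≤ M * ‖x j‖ := hnorm _ (hxC j)
      have h3 : (1 - M) * ‖x j‖ ≤ ‖x j - h^[n] (x j)‖ := by nlinarith
      calc ‖x j‖ = (1 - M)⁻¹ * ((1 - M) * ‖x j‖) := by field_simp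
        _ ≤ (1 - M)⁻¹ * ‖x j - h^[n] (x j)‖ := by
            exact mul_le_mul_of_nonneg_left h3 (le_of_lt (inv_pos.2 h1M))
    have htend : Tendsto (fun j => (1 - M)⁻¹ * ‖x j - h^[n] (x j)‖) atTop (𝓝 0) := by
      have := (tendsto_zero_iff_norm_tendsto_zero.1 hfinal).const_mul ((1 - M)⁻¹)
      simpa using this
    exact squeeze_zero (fun j => norm_nonneg _) hbound htend
  refine ⟨main, ?_⟩
  intro x hx hfix
  have := main (fun _ => x) (fun _ => hx) (by
    exact Metric.isBounded_range_iff.2 ⟨0, fun i j => by simp⟩) (by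
    simp [hfix])
  exact (tendsto_nhds_unique tendsto_const_nhds this)
end

section
/- Let C be a proper cone (closed, convex, pointed cone) in a Banach space X. For u, x, y ∈ C \ {0} with M(x/u) < ∞ and M(y/x) < ∞, one has M(y+u / x+u) ≤ ((M(y/x) ∨ 1) · M(x/u) + 1)/(M(x/u) + 1), where M(y/x) := inf{b ∈ ℝ : y ≤ b x} and the order is induced by C. -/
open Set

theorem M_add_unit_estimate
    {X : Type*} [NormedAddCommGroup X] [NormedSpace ℝ X] [CompleteSpace X]
    (C : Set X)
    (hclosed : IsClosed C) (hconv : Convex ℝ C)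
    (hcone : ∀ t : ℝ, 0 ≤ t → ∀ x ∈ C, t • x ∈ C)
    (hpointed : ∀ x ∈ C, -x ∈ C → x = 0)
    (u x y : X) (hu : u ∈ C) (hx : x ∈ C) (hy : y ∈ C)
    (hu0 : u ≠ 0) (hx0 : x ≠ 0) (hy0 : y ≠ 0)
    (hMxu : {b : ℝ | b • u - x ∈ C}.Nonempty)
    (hMyx : {b : ℝ | b • x - y ∈ C}.Nonempty) :
    sInf {b : ℝ | b • (x + u) - (y + u) ∈ C} ≤
      ((max (sInf {b : ℝ | b • x - y ∈ C}) 1) * sInf {b : ℝ | b • u - x ∈ C} + 1) /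
        (sInf {b : ℝ | b • u - x ∈ C} + 1) := by
  -- cone is closed under addition
  have hadd : ∀ v ∈ C, ∀ w ∈ C, v + w ∈ C := by
    intro v hv w hw
    have h2 : ((1:ℝ)/2) • v + ((1:ℝ)/2) • w ∈ C :=
      hconv hv hw (by norm_num) (by norm_num) (by norm_num)
    have := hcone 2 (by norm_num) _ h2
    have hx2 : (2:ℝ) • (((1:ℝ)/2) • v + ((1:ℝ)/2) • w) = v + w := by
      rw [smul_add, smul_smul, smul_smul]; norm_num
    rwa [hx2] at this
  -- every element of such a set is positive
  have hpos : ∀ v ∈ C, ∀ w ∈ C, w ≠ 0 → ∀ b : ℝ, b • v - w ∈ C → 0 < b := by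
    intro v hv w hw hw0 b hb
    by_contra hble
    push_neg at hble
    have hnegb : (-b) • v ∈ C := hcone (-b) (by linarith) v hv
    have hneg : -(b • v - w) ∈ C := by
      have : w + (-b) • v ∈ C := hadd w hw _ hnegb
      have e : -(b • v - w) = w + (-b) • v := by
        rw [neg_sub, neg_smul]; abel
      rwa [e]
    have heq : b • v - w = 0 := hpointed _ hb hneg
    have hwb : w = b • v := by
      have := sub_eq_zero.mp heq; exact this.symm
    rcases lt_or_eq_of_le hble with hblt | hbeq
    · have : -w ∈ C := by
        rw [hwb]
        have := hcone (-b) (by linarith) v hv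
        rwa [neg_smul] at this
      exact hw0 (hpointed w hw this)
    · apply hw0; rw [hwb, hbeq, zero_smul]
  -- closedness of the sets
  have hclosedset : ∀ v w : X, IsClosed {b : ℝ | b • v - w ∈ C} := by
    intro v w
    have : Continuous fun b : ℝ => b • v - w := by continuity
    exact hclosed.preimage this
  have hbdd : ∀ v ∈ C, ∀ w ∈ C, w ≠ 0 → BddBelow {b : ℝ | b • v - w ∈ C} := by
    intro v hv w hw hw0
    exact ⟨0, fun b hb => le_of_lt (hpos v hv w hw hw0 b hb)⟩
  set α := sInf {b : ℝ | b • x - y ∈ C} with hα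
  set β := sInf {b : ℝ | b • u - x ∈ C} with hβ
  have hαmem : α • x - y ∈ C :=
    (hclosedset x y).csInf_mem hMyx (hbdd x hx y hy hy0)
  have hβmem : β • u - x ∈ C :=
    (hclosedset u x).csInf_mem hMxu (hbdd u hu x hx hx0)
  have hβpos : 0 < β := hpos u hu x hx hx0 β hβmem
  set a := max α 1 with ha
  have ha1 : 1 ≤ a := le_max_right _ _
  have haα : α ≤ a := le_max_left _ _
  have haxy : a • x - y ∈ C := by
    have h1 : (a - α) • x ∈ C := hcone _ (by linarith) x hx
    have := hadd _ hαmem _ h1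
    have e : α • x - y + (a - α) • x = a • x - y := by
      rw [sub_smul]; abel
    rwa [e] at this
  -- the candidate m
  set m := (a * β + 1) / (β + 1) with hm
  have hβ1 : (0:ℝ) < β + 1 := by linarith
  have hβ1' : (β : ℝ) + 1 ≠ 0 := ne_of_gt hβ1
  have key : m • (x + u) - (y + u) = (a • x - y) + ((a - 1) / (β + 1)) • (β • u - x) := by
    rw [hm]
    match_scalars <;> field_simp <;> ring
  have hcoef : 0 ≤ (a - 1) / (β + 1) := div_nonneg (by linarith) (le_of_lt hβ1)
  have hmmem : m • (x + u) - (y + u) ∈ C := by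
    rw [key]
    exact hadd _ haxy _ (hcone _ hcoef _ hβmem)
  have hyu0 : y + u ≠ 0 := by
    intro h
    have e : -y = u := neg_eq_of_add_eq_zero_right h
    have : -y ∈ C := by rw [e]; exact hu
    exact hy0 (hpointed y hy this)
  have hxuC : x + u ∈ C := hadd x hx u hu
  have hyuC : y + u ∈ C := hadd y hy u hu
  exact csInf_le (hbdd _ hxuC _ hyuC hyu0) hmmem
end

section
/- Let C be a proper cone with nonempty interior in a Banach space, and h : C → C continuous, homogeneous, and order-preserving. If there exist x ∈ int C, λ > 0 with h^n(x) ≤ λ^n x, and y ∈ C \ {0}, μ > 0 with h^m(y) = μ^m y, then μ ≤ λ. Consequently sup_m (λ_m)^{1/m} ≤ inf_n cw(h^n)^{1/n}, where λ_m is the cone eigenvalue spectral radius of h^m and cw is the Collatz-Wielandt number. -/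
open Set

/-- The Collatz-Wielandt number `cw(f) = inf {λ > 0 : ∃ x ∈ int C, f(x) ≤ λ x}`. -/
noncomputable def collatzWielandt {X : Type*} [NormedAddCommGroup X] [NormedSpace ℝ X]
    (C : Set X) (f : X → X) : ENNReal :=
  ⨅ (l : ℝ) (_ : 0 < l ∧ ∃ x ∈ interior C, l • x - f x ∈ C), ENNReal.ofReal l

/-- The cone eigenvalue spectral radius `sup {λ ≥ 0 : ∃ x ∈ C \ {0}, g(x) = λ x}`. -/
noncomputable def eigenvalueSpectralRadius {X : Type*} [NormedAddCommGroup X]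
    [NormedSpace ℝ X] (C : Set X) (g : X → X) : ENNReal :=
  ⨆ (l : ℝ) (_ : 0 ≤ l ∧ ∃ y ∈ C, y ≠ 0 ∧ g y = l • y), ENNReal.ofReal l

/-!
If `g x ≤ L x` with `x` interior and `g y = M y` with `y ≠ 0`, pick `b` with `y ≤ b x`.
Monotonicity and homogeneity of `gᵏ` give `Mᵏ y = gᵏ y ≤ b gᵏ x ≤ b Lᵏ x`, i.e.
`y ≤ b (L / M)ᵏ x`. If `L < M` the right side tends to `0`, so `-y ∈ C` by closedness and
`y = 0` by pointedness. For iterates apply this to `g = h^[n m]`, `L = λ^(n m)`, `M = μ^(n m)`;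
since `t ↦ t ^ p` is monotone, comparing `λₘ^(1/m)` with `cw(hⁿ)^(1/n)` reduces to such pairs.
-/

section Algebraic

variable {E : Type*} [AddCommGroup E] {C : Set E} {g : E → E}

def ConeMonotoneOn (C : Set E) (g : E → E) : Prop :=
  ∀ x ∈ C, ∀ y ∈ C, y - x ∈ C → g y - g x ∈ C

theorem ConeMonotoneOn.iterate (hg : ConeMonotoneOn C g) (hmaps : MapsTo g C C) (k : ℕ) :
    ConeMonotoneOn C g^[k] := by
  induction k with
  | zero => exact fun x _ y _ hxy => hxy
  | succ k ih =>
    intro x hx y hy hxy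
    rw [Function.iterate_succ_apply', Function.iterate_succ_apply']
    exact hg _ (hmaps.iterate k hx) _ (hmaps.iterate k hy) (ih x hx y hy hxy)

variable [Module ℝ E]

def PosHomogeneousOn (C : Set E) (g : E → E) : Prop :=
  ∀ t : ℝ, 0 < t → ∀ x ∈ C, g (t • x) = t • g x

theorem Convex.add_mem_of_smul_mem (hconv : Convex ℝ C)
    (hcone : ∀ t : ℝ, 0 ≤ t → ∀ x ∈ C, t • x ∈ C) {a b : E} (ha : a ∈ C) (hb : b ∈ C) :
    a + b ∈ C := by
  have hmid : (1 / 2 : ℝ) • a + (1 / 2 : ℝ) • b ∈ C := hconv ha hb (by norm_num) (by norm_num)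
    (by norm_num)
  convert hcone 2 (by norm_num) _ hmid using 1
  rw [smul_add, smul_smul, smul_smul]
  norm_num

theorem Convex.sub_mem_trans (hconv : Convex ℝ C)
    (hcone : ∀ t : ℝ, 0 ≤ t → ∀ x ∈ C, t • x ∈ C) {a b c : E} (hab : a - b ∈ C)
    (hbc : b - c ∈ C) : a - c ∈ C := by
  simpa using hconv.add_mem_of_smul_mem hcone hab hbc

theorem PosHomogeneousOn.iterate (hg : PosHomogeneousOn C g) (hmaps : MapsTo g C C) (k : ℕ) :
    PosHomogeneousOn C g^[k] := by
  induction k with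
  | zero => exact fun _ _ _ _ => rfl
  | succ k ih =>
    intro t ht x hx
    rw [Function.iterate_succ_apply', Function.iterate_succ_apply', ih t ht x hx,
      hg t ht _ (hmaps.iterate k hx)]

theorem PosHomogeneousOn.iterate_eq_pow_smul (hg : PosHomogeneousOn C g) {y : E} (hy : y ∈ C)
    {c : ℝ} (hc : 0 < c) (heig : g y = c • y) (k : ℕ) :
    g^[k] y = c ^ k • y := by
  induction k with
  | zero => simp
  | succ k ih =>
    rw [Function.iterate_succ_apply', ih, hg _ (pow_pos hc k) y hy, heig, smul_smul, pow_succ]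

theorem iterate_sub_mem_of_smul_sub_mem (hconv : Convex ℝ C)
    (hcone : ∀ t : ℝ, 0 ≤ t → ∀ x ∈ C, t • x ∈ C) (hmaps : MapsTo g C C)
    (hmono : ConeMonotoneOn C g) (hhom : PosHomogeneousOn C g) {x : E} (hx : x ∈ C) {L : ℝ}
    (hL : 0 < L) (hsub : L • x - g x ∈ C) (k : ℕ) : L ^ k • x - g^[k] x ∈ C := by
  induction k with
  | zero => simpa using hcone 0 le_rfl x hx
  | succ k ih =>
    have hLx : L • x ∈ C := hcone L hL.le x hx
    -- `g^[k+1] x = g^[k] (g x) ≤ g^[k] (L x) = L g^[k] x ≤ L Lᵏ x`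
    have hstep : L • g^[k] x - g^[k+1] x ∈ C := by
      rw [Function.iterate_succ_apply, ← hhom.iterate hmaps k L hL x hx]
      exact hmono.iterate hmaps k _ (hmaps hx) _ hLx hsub
    have hscaled : L ^ (k + 1) • x - L • g^[k] x ∈ C := by
      simpa [pow_succ', mul_smul, smul_sub] using hcone L hL.le _ ih
    exact hconv.sub_mem_trans hcone hscaled hstep

end Algebraic

section Topological

variable {E : Type*} [AddCommGroup E] [Module ℝ E] [TopologicalSpace E]
  [IsTopologicalAddGroup E] [ContinuousSMul ℝ E] {C : Set E}

theorem exists_pos_smul_sub_mem_of_mem_interior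
    (hcone : ∀ t : ℝ, 0 ≤ t → ∀ x ∈ C, t • x ∈ C) {x : E} (hx : x ∈ interior C) (y : E) :
    ∃ b : ℝ, 0 < b ∧ b • x - y ∈ C := by
  have hcont : Filter.Tendsto (fun δ : ℝ => x - δ • y) (nhdsWithin 0 (Ioi 0)) (nhds x) := by
    have : Continuous fun δ : ℝ => x - δ • y := by fun_prop
    simpa using (this.tendsto 0).mono_left nhdsWithin_le_nhds
  obtain ⟨δ, hδmem, hδ⟩ :=
    ((hcont.eventually (isOpen_interior.mem_nhds hx)).and self_mem_nhdsWithin).exists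
  refine ⟨δ⁻¹, inv_pos.2 hδ, ?_⟩
  have := hcone δ⁻¹ (inv_pos.2 hδ).le _ (interior_subset hδmem)
  rwa [smul_sub, smul_smul, inv_mul_cancel₀ hδ.ne', one_smul] at this

theorem eq_zero_of_forall_smul_sub_mem (hclosed : IsClosed C)
    (hpointed : ∀ x ∈ C, -x ∈ C → x = 0) {x y : E} (hy : y ∈ C) {c : ℕ → ℝ}
    (hc : Filter.Tendsto c Filter.atTop (nhds 0)) (hsub : ∀ k, c k • x - y ∈ C) : y = 0 := by
  have hlim : Filter.Tendsto (fun k => c k • x - y) Filter.atTop (nhds (-y)) := by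
    simpa using (hc.smul_const x).sub_const y
  exact hpointed y hy (hclosed.mem_of_tendsto hlim (Filter.Eventually.of_forall hsub))

theorem eigenvalue_le_of_smul_sub_mem (hclosed : IsClosed C) (hconv : Convex ℝ C)
    (hcone : ∀ t : ℝ, 0 ≤ t → ∀ x ∈ C, t • x ∈ C) (hpointed : ∀ x ∈ C, -x ∈ C → x = 0)
    {g : E → E} (hmaps : MapsTo g C C) (hmono : ConeMonotoneOn C g)
    (hhom : PosHomogeneousOn C g) {x : E} (hx : x ∈ interior C) {L : ℝ} (hL : 0 < L)
    (hsub : L • x - g x ∈ C) {y : E} (hy : y ∈ C) (hy0 : y ≠ 0) {M : ℝ} (hM : 0 < M)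
    (heig : g y = M • y) : M ≤ L := by
  have hxC : x ∈ C := interior_subset hx
  obtain ⟨b, hb, hbx⟩ := exists_pos_smul_sub_mem_of_mem_interior hcone hx y
  have hdom : ∀ k : ℕ, (b * (L / M) ^ k) • x - y ∈ C := by
    intro k
    have hMk : (0 : ℝ) < M ^ k := pow_pos hM k
    have hiter : b • g^[k] x - M ^ k • y ∈ C := by
      rw [← hhom.iterate hmaps k b hb x hxC, ← hhom.iterate_eq_pow_smul hy hM heig k]
      exact hmono.iterate hmaps k _ hy _ (hcone b hb.le x hxC) hbx
    have hbound : (b * L ^ k) • x - b • g^[k] x ∈ C := by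
      simpa [mul_smul, smul_sub] using
        hcone b hb.le _ (iterate_sub_mem_of_smul_sub_mem hconv hcone hmaps hmono hhom hxC hL hsub k)
    have := hcone (M ^ k)⁻¹ (inv_pos.2 hMk).le _ (hconv.sub_mem_trans hcone hbound hiter)
    rw [smul_sub, smul_smul, smul_smul, inv_mul_cancel₀ hMk.ne', one_smul] at this
    convert this using 3
    rw [div_pow]
    field_simp
  by_contra! hLM
  have hr : Filter.Tendsto (fun k : ℕ => b * (L / M) ^ k) Filter.atTop (nhds 0) := by
    simpa using (tendsto_pow_atTop_nhds_zero_of_lt_one (div_nonneg hL.le hM.le)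
      ((div_lt_one hM).2 hLM)).const_mul b
  exact hy0 (eq_zero_of_forall_smul_sub_mem hclosed hpointed hy hr hdom)

theorem eigenvalue_le_of_iterate_smul_sub_mem (hclosed : IsClosed C) (hconv : Convex ℝ C)
    (hcone : ∀ t : ℝ, 0 ≤ t → ∀ x ∈ C, t • x ∈ C) (hpointed : ∀ x ∈ C, -x ∈ C → x = 0)
    {h : E → E} (hmaps : MapsTo h C C) (hmono : ConeMonotoneOn C h)
    (hhom : PosHomogeneousOn C h) {n m : ℕ} (hn : n ≠ 0) (hm : m ≠ 0) {x : E}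
    (hx : x ∈ interior C) {l : ℝ} (hl : 0 < l) (hsub : l ^ n • x - h^[n] x ∈ C) {y : E}
    (hy : y ∈ C) (hy0 : y ≠ 0) {μ : ℝ} (hμ : 0 < μ) (heig : h^[m] y = μ ^ m • y) : μ ≤ l := by
  refine (pow_le_pow_iff_left₀ hμ.le hl.le (mul_ne_zero hn hm)).1 ?_
  refine eigenvalue_le_of_smul_sub_mem hclosed hconv hcone hpointed (hmaps.iterate (n * m))
    (hmono.iterate hmaps _) (hhom.iterate hmaps _) hx (pow_pos hl _) ?_ hy hy0 (pow_pos hμ _) ?_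
  · rw [pow_mul, Function.iterate_mul]
    exact iterate_sub_mem_of_smul_sub_mem hconv hcone (hmaps.iterate n) (hmono.iterate hmaps n)
      (hhom.iterate hmaps n) (interior_subset hx) (pow_pos hl n) hsub m
  · rw [mul_comm n m, pow_mul, Function.iterate_mul]
    exact (hhom.iterate hmaps m).iterate_eq_pow_smul hy (pow_pos hμ m) heig n

end Topological

theorem ENNReal.iSup₂_rpow_inv_le_iInf₂_rpow_inv {ι κ : Type*} {P : ι → Prop} {Q : κ → Prop}
    {f : ι → ENNReal} {g : κ → ENNReal} {p q : ℝ} (hp : 0 < p) (hq : 0 < q)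
    (h : ∀ i, P i → ∀ j, Q j → f i ^ p⁻¹ ≤ g j ^ q⁻¹) :
    (⨆ (i) (_ : P i), f i) ^ p⁻¹ ≤ (⨅ (j) (_ : Q j), g j) ^ q⁻¹ := by
  rw [ENNReal.rpow_inv_le_iff hp]
  refine iSup₂_le fun i hi => ?_
  rw [← ENNReal.rpow_inv_le_iff hp, ENNReal.le_rpow_inv_iff hq]
  refine le_iInf₂ fun j hj => ?_
  rw [← ENNReal.le_rpow_inv_iff hq]
  exact h i hi j hj

theorem eigenvalue_le_collatzWielandt_general
    {X : Type*} [NormedAddCommGroup X] [NormedSpace ℝ X]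
    (C : Set X)
    (hclosed : IsClosed C) (hconv : Convex ℝ C)
    (hcone : ∀ t : ℝ, 0 ≤ t → ∀ x ∈ C, t • x ∈ C)
    (hpointed : ∀ x ∈ C, -x ∈ C → x = 0)
    (h : X → X) (hmaps : MapsTo h C C)
    (hhom : ∀ t : ℝ, 0 < t → ∀ x ∈ C, h (t • x) = t • h x)
    (hmono : ∀ x ∈ C, ∀ y ∈ C, y - x ∈ C → h y - h x ∈ C) :
    (∀ n m : ℕ, 1 ≤ n → 1 ≤ m → ∀ x ∈ interior C, ∀ l : ℝ, 0 < l →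
        l ^ n • x - h^[n] x ∈ C →
        ∀ y ∈ C, y ≠ 0 → ∀ μ : ℝ, 0 < μ → h^[m] y = μ ^ m • y → μ ≤ l) ∧
    (⨆ (m : ℕ) (_ : 1 ≤ m), (eigenvalueSpectralRadius C (h^[m])) ^ ((m : ℝ)⁻¹)) ≤
      (⨅ (n : ℕ) (_ : 1 ≤ n), (collatzWielandt C (h^[n])) ^ ((n : ℝ)⁻¹)) := by
  refine ⟨fun n m hn hm x hx l hl hsub y hy hy0 μ hμ heig =>
    eigenvalue_le_of_iterate_smul_sub_mem hclosed hconv hcone hpointed hmaps hmono hhom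
      (by omega) (by omega) hx hl hsub hy hy0 hμ heig,
    iSup₂_le fun m hm => le_iInf₂ fun n hn => ?_⟩
  refine ENNReal.iSup₂_rpow_inv_le_iInf₂_rpow_inv (by positivity) (by positivity) ?_
  have hn0 : n ≠ 0 := by omega
  have hm0 : m ≠ 0 := by omega
  rintro l ⟨hl, y, hy, hy0, heig⟩ l' ⟨hl', x, hx, hsub⟩
  rw [ENNReal.ofReal_rpow_of_nonneg hl (by positivity),
    ENNReal.ofReal_rpow_of_nonneg hl'.le (by positivity)]
  refine ENNReal.ofReal_le_ofReal ?_
  rcases hl.eq_or_lt with rfl | hl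
  · rw [Real.zero_rpow (by positivity)]
    positivity
  · refine eigenvalue_le_of_iterate_smul_sub_mem hclosed hconv hcone hpointed hmaps hmono hhom
      hn0 hm0 hx (by positivity) ?_ hy hy0 (by positivity) ?_
    · rwa [Real.rpow_inv_natCast_pow hl'.le hn0]
    · rwa [Real.rpow_inv_natCast_pow hl.le hm0]

theorem eigenvalue_le_collatzWielandt
    {X : Type*} [NormedAddCommGroup X] [NormedSpace ℝ X] [CompleteSpace X]
    (C : Set X)
    (hclosed : IsClosed C) (hconv : Convex ℝ C)
    (hcone : ∀ t : ℝ, 0 ≤ t → ∀ x ∈ C, t • x ∈ C)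
    (hpointed : ∀ x ∈ C, -x ∈ C → x = 0)
    (hint : (interior C).Nonempty)
    (h : X → X) (hmaps : MapsTo h C C) (hcont : ContinuousOn h C)
    (hhom : ∀ t : ℝ, 0 < t → ∀ x ∈ C, h (t • x) = t • h x)
    (hmono : ∀ x ∈ C, ∀ y ∈ C, y - x ∈ C → h y - h x ∈ C) :
    (∀ n m : ℕ, 1 ≤ n → 1 ≤ m → ∀ x ∈ interior C, ∀ l : ℝ, 0 < l →
        l ^ n • x - h^[n] x ∈ C →
        ∀ y ∈ C, y ≠ 0 → ∀ μ : ℝ, 0 < μ → h^[m] y = μ ^ m • y → μ ≤ l) ∧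
    (⨆ (m : ℕ) (_ : 1 ≤ m), (eigenvalueSpectralRadius C (h^[m])) ^ ((m : ℝ)⁻¹)) ≤
      (⨅ (n : ℕ) (_ : 1 ≤ n), (collatzWielandt C (h^[n])) ^ ((n : ℝ)⁻¹)) :=
  eigenvalue_le_collatzWielandt_general C hclosed hconv hcone hpointed h hmaps hhom hmono
end
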